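/- arXiv:math/0503484 — 5 statements merged into one kernel-verified Lean document; each statement's English description precedes it below -/
import Mathlib

section
/- Let G be a connected simple graph with vertex set V of size n and edge set E, let v₀ ∈ V be a fixed vertex, and let F be a set of n−1 edges of G. Let M be the square submatrix of the reduced incidence matrix of G over ℤ/2ℤ with rows indexed by V \ {v₀} and columns indexed by F. Then M is invertible if and only if there exists exactly one bijection σ : V \ {v₀} → F such that for every u ∈ V \ {v₀} the entry M_{u, σ(u)} is nonzero (i.e., the determinant expansion of M contains a unique nonzero monomial). -/
/-- The square submatrix of the reduced incidence matrix of a graph over `ZMod 2`,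
with rows indexed by the vertices different from `v₀` and columns indexed by the
edges in `F`: the `(u, e)` entry is `1` if `u` is an endpoint of `e`, else `0`. -/
def redIncSub {V : Type*} [DecidableEq V] (v₀ : V) (F : Finset (Sym2 V)) :
    Matrix {u : V // u ≠ v₀} {e : Sym2 V // e ∈ F} (ZMod 2) :=
  Matrix.of fun u e => if (u : V) ∈ (e : Sym2 V) then 1 else 0

/-- A (possibly rectangular-typed) matrix is invertible if it has a two-sided inverse. -/
def MatInvertible {A B : Type*} [Fintype A] [Fintype B] [DecidableEq A] [DecidableEq B]
    (M : Matrix A B (ZMod 2)) : Prop :=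
  ∃ N : Matrix B A (ZMod 2), M * N = 1 ∧ N * M = 1

/-!
Over `ZMod 2` signs disappear, so the determinant of `M` (after identifying rows and columns by
any bijection) counts modulo 2 the bijections `σ` with `M u (σ u) ≠ 0` for all `u`. Hence a
unique such bijection makes `M` invertible. Conversely, if `σ ≠ τ` are two of them, let `D` be the
set of columns `e` with `σ⁻¹ e ≠ τ⁻¹ e`. Every column of an incidence matrix has at most two
nonzero entries, so a column `e ∈ D` is exactly the indicator of `{σ⁻¹ e, τ⁻¹ e}`; summing over
`D` counts every row `u` with `σ u ≠ τ u` twice, so the columns in `D` add up to `0` and `M` is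
singular.
-/

open Finset Matrix

lemma ZMod.two_eq_one_of_ne_zero {x : ZMod 2} (hx : x ≠ 0) : x = 1 := by
  revert x; decide

lemma ZMod.two_intUnits_smul (u : ℤˣ) (x : ZMod 2) : u • x = x := by
  rcases Int.units_eq_one_or u with rfl | rfl
  · exact one_smul _ _
  · rw [Units.neg_smul, one_smul, CharTwo.neg_eq]

section

variable {A B A' B' : Type*} [Fintype A] [Fintype B] [DecidableEq A] [DecidableEq B]
  [Fintype A'] [Fintype B'] [DecidableEq A'] [DecidableEq B']

theorem MatInvertible.submatrix_equiv {M : Matrix A B (ZMod 2)} (hM : MatInvertible M)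
    (e₁ : A' ≃ A) (e₂ : B' ≃ B) : MatInvertible (M.submatrix e₁ e₂) := by
  obtain ⟨N, hMN, hNM⟩ := hM
  exact ⟨N.submatrix e₂ e₁, by rw [submatrix_mul_equiv, hMN, submatrix_one_equiv],
    by rw [submatrix_mul_equiv, hNM, submatrix_one_equiv]⟩

theorem matInvertible_iff_det_submatrix_ne_zero (M : Matrix A B (ZMod 2)) (e : A ≃ B) :
    MatInvertible M ↔ (M.submatrix id e).det ≠ 0 := by
  rw [← isUnit_iff_ne_zero, ← isUnit_iff_isUnit_det, isUnit_iff_exists]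
  refine ⟨fun hM => hM.submatrix_equiv (Equiv.refl A) e, fun hM => ?_⟩
  simpa using MatInvertible.submatrix_equiv hM (Equiv.refl A) e.symm

theorem det_submatrix_eq_card_nonzero_transversals (M : Matrix A B (ZMod 2)) (e : A ≃ B) :
    (M.submatrix id e).det = #{σ : A ≃ B | ∀ u, M u (σ u) ≠ 0} := by
  have hprod (σ : A ≃ B) : ∏ u, M u (σ u) = if ∀ u, M u (σ u) ≠ 0 then 1 else 0 := by
    split_ifs with hσ
    · exact prod_eq_one fun u _ => ZMod.two_eq_one_of_ne_zero (hσ u)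
    · obtain ⟨u, hu⟩ := not_forall_not.mp hσ
      exact prod_eq_zero (mem_univ u) hu
  rw [← det_transpose, det_apply, ← sum_boole]
  refine Fintype.sum_equiv (Equiv.refl A |>.equivCongr e) _ _ fun π => ?_
  rw [ZMod.two_intUnits_smul, ← hprod]
  rfl

theorem matInvertible_iff_odd_card {M : Matrix A B (ZMod 2)}
    (h : Fintype.card A = Fintype.card B) :
    MatInvertible M ↔ Odd #{σ : A ≃ B | ∀ u, M u (σ u) ≠ 0} := by
  rw [matInvertible_iff_det_submatrix_ne_zero M (Fintype.equivOfCardEq h),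
    det_submatrix_eq_card_nonzero_transversals, ZMod.natCast_ne_zero_iff_odd]

theorem MatInvertible.eq_of_forall_ne_zero {M : Matrix A B (ZMod 2)} (hM : MatInvertible M)
    (hcol : ∀ e a b u, a ≠ b → M a e ≠ 0 → M b e ≠ 0 → M u e ≠ 0 → u = a ∨ u = b)
    {σ τ : A ≃ B} (hσ : ∀ u, M u (σ u) ≠ 0) (hτ : ∀ u, M u (τ u) ≠ 0) : σ = τ := by
  obtain ⟨N, -, hNM⟩ := hM
  set c : B → ZMod 2 := fun e => if σ.symm e = τ.symm e then 0 else 1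
  have hentry (u : A) (e : B) :
      M u e * c e = (if e = σ u then c e else 0) + (if e = τ u then c e else 0) := by
    by_cases hD : σ.symm e = τ.symm e
    · simp [c, hD]
    have hce : c e = 1 := if_neg hD
    have hσu : e = σ u ↔ u = σ.symm e := by rw [Equiv.eq_symm_apply, eq_comm]
    have hτu : e = τ u ↔ u = τ.symm e := by rw [Equiv.eq_symm_apply, eq_comm]
    have ha : M (σ.symm e) e ≠ 0 := by simpa using hσ (σ.symm e)
    have hb : M (τ.symm e) e ≠ 0 := by simpa using hτ (τ.symm e)
    simp only [hσu, hτu, hce, mul_one]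
    by_cases hu : M u e = 0
    · have hua : u ≠ σ.symm e := by rintro rfl; exact ha hu
      have hub : u ≠ τ.symm e := by rintro rfl; exact hb hu
      simp [hu, hua, hub]
    · rcases hcol e _ _ u hD ha hb hu with rfl | rfl
      · simp [ZMod.two_eq_one_of_ne_zero hu, hD]
      · simp [ZMod.two_eq_one_of_ne_zero hu, Ne.symm hD]
  have hc_eq (u : A) : c (σ u) = c (τ u) := by
    have hσ' : σ.symm (σ u) = τ.symm (σ u) ↔ σ u = τ u := by
      rw [σ.symm_apply_apply, Equiv.eq_symm_apply, eq_comm]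
    have hτ' : σ.symm (τ u) = τ.symm (τ u) ↔ σ u = τ u := by
      rw [τ.symm_apply_apply, Equiv.symm_apply_eq, eq_comm]
    simp only [c, hσ', hτ']
  have hker : M *ᵥ c = 0 := funext fun u => by
    simp only [mulVec, dotProduct, hentry, sum_add_distrib, Fintype.sum_ite_eq', hc_eq]
    exact CharTwo.add_self_eq_zero _
  have hc : c = 0 := by rw [← one_mulVec c, ← hNM, ← mulVec_mulVec, hker, mulVec_zero]
  refine Equiv.symm_bijective.injective (Equiv.ext fun e => ?_)
  by_contra hD
  simpa [c, hD] using congrFun hc e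

end

section

variable {V : Type*} [DecidableEq V] {v₀ : V} {F : Finset (Sym2 V)}

theorem redIncSub_ne_zero_iff {u : {u : V // u ≠ v₀}} {e : {e : Sym2 V // e ∈ F}} :
    redIncSub v₀ F u e ≠ 0 ↔ (u : V) ∈ (e : Sym2 V) := by
  simp [redIncSub]

theorem redIncSub_eq_or_eq_of_ne_zero {e : {e : Sym2 V // e ∈ F}} {a b u : {u : V // u ≠ v₀}}
    (hab : a ≠ b) (ha : redIncSub v₀ F a e ≠ 0) (hb : redIncSub v₀ F b e ≠ 0)
    (hu : redIncSub v₀ F u e ≠ 0) : u = a ∨ u = b := by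
  rw [redIncSub_ne_zero_iff] at ha hb hu
  rw [(Sym2.mem_and_mem_iff (Subtype.coe_injective.ne hab)).1 ⟨ha, hb⟩, Sym2.mem_iff] at hu
  exact hu.imp Subtype.ext Subtype.ext

end

theorem reduced_incidence_invertible_iff_unique_nonzero_monomial_general
    {V : Type*} [Fintype V] [DecidableEq V] {n : ℕ}
    (hV : Fintype.card V = n)
    (v₀ : V) (F : Finset (Sym2 V)) (hFc : F.card = n - 1) :
    MatInvertible (redIncSub v₀ F) ↔
      (∃! σ : {u : V // u ≠ v₀} ≃ {e : Sym2 V // e ∈ F},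
        ∀ u, redIncSub v₀ F u (σ u) ≠ 0) := by
  have hcard : Fintype.card {u : V // u ≠ v₀} = Fintype.card {e // e ∈ F} := by
    rw [Fintype.card_subtype_compl, Fintype.card_subtype_eq, Fintype.card_coe, hV, hFc]
  rw [Fintype.existsUnique_iff_card_one]
  constructor
  · intro hM
    refine le_antisymm (card_le_one.2 fun σ hσ τ hτ => ?_)
      ((matInvertible_iff_odd_card hcard).1 hM).pos
    exact hM.eq_of_forall_ne_zero (fun _ _ _ _ => redIncSub_eq_or_eq_of_ne_zero)
      (mem_filter.1 hσ).2 (mem_filter.1 hτ).2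
  · intro h
    rw [matInvertible_iff_odd_card hcard, h]
    exact odd_one

/-- the square submatrix `M` of the reduced incidence matrix of a connected
graph `G`, with rows indexed by `V \ {v₀}` and columns indexed by a set `F` of `n - 1`
edges, is invertible over `ZMod 2` if and only if there is exactly one bijection
`σ : V \ {v₀} → F` with `M (u, σ u) ≠ 0` for all `u` (a unique nonzero monomial in the
determinant expansion). -/
theorem reduced_incidence_invertible_iff_unique_nonzero_monomial
    {V : Type*} [Fintype V] [DecidableEq V] {n : ℕ} (hn : 2 ≤ n)
    (G : SimpleGraph V) (hG : G.Connected) (hV : Fintype.card V = n)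
    (v₀ : V) (F : Finset (Sym2 V)) (hF : ↑F ⊆ G.edgeSet) (hFc : F.card = n - 1) :
    MatInvertible (redIncSub v₀ F) ↔
      (∃! σ : {u : V // u ≠ v₀} ≃ {e : Sym2 V // e ∈ F},
        ∀ u, redIncSub v₀ F u (σ u) ≠ 0) :=
  reduced_incidence_invertible_iff_unique_nonzero_monomial_general hV v₀ F hFc
end

section
/- Let G be a connected simple graph with vertex set V of size n and edge set E, let v₀ ∈ V be a fixed vertex, and let F be a set of n−1 edges of G. Then F is the edge set of a spanning tree of G (the subgraph with vertex set V and edge set F is connected and acyclic) if and only if there exists exactly one bijection σ : V \ {v₀} → F such that for every u ∈ V \ {v₀} the vertex u is an endpoint of the edge σ(u). -/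
open SimpleGraph
open Fin.NatCast

set_option linter.unusedSectionVars false
set_option maxHeartbeats 1000000

section Helpers

variable {V : Type*} [Fintype V] [DecidableEq V]

/-- every non-root vertex of a connected graph has a neighbour strictly closer to the root -/
lemma exists_parent (H : SimpleGraph V) (hc : H.Connected) (v₀ u : V) (hu : u ≠ v₀) :
    ∃ w, H.Adj u w ∧ H.dist w v₀ + 1 = H.dist u v₀ := by
  have hpos : 0 < H.dist u v₀ := hc.pos_dist_of_ne hu
  obtain ⟨p, hp⟩ := hc.exists_walk_length_eq_dist u v₀
  cases p with
  | nil => exact absurd rfl hu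
  | @cons _ w _ h q =>
    refine ⟨w, h, ?_⟩
    have h1 : H.dist w v₀ ≤ q.length := H.dist_le q
    obtain ⟨r, hr⟩ := hc.exists_walk_length_eq_dist w v₀
    have h2 : H.dist u v₀ ≤ r.length + 1 := by
      simpa using H.dist_le (SimpleGraph.Walk.cons h r)
    simp only [SimpleGraph.Walk.length_cons] at hp
    omega

lemma card_ne_subtype (v₀ : V) :
    Fintype.card {u : V // u ≠ v₀} = Fintype.card V - 1 := by
  have : Fintype.card {u : V // ¬ (u = v₀)} = Fintype.card V - Fintype.card {u : V // u = v₀} :=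
    Fintype.card_subtype_compl _
  simpa [Fintype.card_subtype_eq] using this

lemma support_getElem? {W : Type*} {G : SimpleGraph W} {u v : W}
    (p : G.Walk u v) : ∀ {i : ℕ}, i ≤ p.length → p.support[i]? = some (p.getVert i) := by
  induction p with
  | nil =>
    intro i hi
    have hi0 : i = 0 := by simpa using hi
    subst hi0
    simp [SimpleGraph.Walk.support_nil, SimpleGraph.Walk.getVert_zero]
  | cons h q ih =>
    intro i hi
    cases i with
    | zero => simp [SimpleGraph.Walk.support_cons, SimpleGraph.Walk.getVert_zero]
    | succ i =>
      rw [SimpleGraph.Walk.support_cons, SimpleGraph.Walk.getVert_cons_succ]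
      simp only [List.getElem?_cons_succ]
      exact ih (by simpa [SimpleGraph.Walk.length_cons] using hi)

lemma cycle_getVert_inj {W : Type*} {G : SimpleGraph W} {v : W}
    {c : G.Walk v v} (hc : c.IsCycle) {i j : ℕ} (hi1 : 1 ≤ i) (hi2 : i ≤ c.length)
    (hj1 : 1 ≤ j) (hj2 : j ≤ c.length) (hij : c.getVert i = c.getVert j) : i = j := by
  have hnd : c.support.tail.Nodup := hc.support_nodup
  have hlen : c.support.tail.length = c.length := by
    have h1 := c.length_support
    have h2 : c.support.length = c.support.tail.length + 1 := by
      conv_lhs => rw [c.support_eq_cons]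
      simp
    omega
  obtain ⟨i, rfl⟩ : ∃ i', i = i' + 1 := ⟨i - 1, by omega⟩
  obtain ⟨j, rfl⟩ : ∃ j', j = j' + 1 := ⟨j - 1, by omega⟩
  have key : ∀ k : ℕ, k + 1 ≤ c.length → c.support.tail[k]? = some (c.getVert (k + 1)) := by
    intro k hk
    have h1 := support_getElem? c (i := k + 1) hk
    rw [c.support_eq_cons] at h1
    simpa using h1
  have := (List.getElem?_inj (by omega : i < c.support.tail.length) hnd).mp
    ((key i (by omega)).trans (by rw [hij, ← key j (by omega)]))
  omega

lemma forward_lemma {n : ℕ} (hn : 2 ≤ n) (hV : Fintype.card V = n)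
    (v₀ : V) (F : Finset (Sym2 V)) (hFc : F.card = n - 1)
    (hconn : (SimpleGraph.fromEdgeSet (↑F : Set (Sym2 V))).Connected) :
    ∃! σ : {u : V // u ≠ v₀} ≃ {e : Sym2 V // e ∈ F},
      ∀ u, (u : V) ∈ ((σ u : {e : Sym2 V // e ∈ F}) : Sym2 V) := by
  classical
  set H := SimpleGraph.fromEdgeSet (↑F : Set (Sym2 V)) with hH
  choose par hpar1 hpar2 using fun u : {u : V // u ≠ v₀} =>
    exists_parent H hconn v₀ u.1 u.2
  have hmem : ∀ u : {u : V // u ≠ v₀}, s(u.1, par u) ∈ F := fun u => by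
    have := ((SimpleGraph.fromEdgeSet_adj _).mp (hpar1 u)).1
    exact this
  let f : {u : V // u ≠ v₀} → {e : Sym2 V // e ∈ F} := fun u => ⟨s(u.1, par u), hmem u⟩
  have hfinj : Function.Injective f := by
    intro a b hab
    have h := Subtype.ext_iff.mp hab
    rcases Sym2.eq_iff.mp h with ⟨h1, h2⟩ | ⟨h1, h2⟩
    · exact Subtype.ext h1
    · exfalso
      have ha := hpar2 a
      have hb := hpar2 b
      rw [h2] at ha
      rw [← h1] at hb
      omega
  have hcard : Fintype.card {u : V // u ≠ v₀} = Fintype.card {e : Sym2 V // e ∈ F} := by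
    rw [card_ne_subtype, hV, Fintype.card_coe, hFc]
  have hbij : Function.Bijective f :=
    (Fintype.bijective_iff_injective_and_card f).mpr ⟨hfinj, hcard⟩
  refine ⟨Equiv.ofBijective f hbij, fun u => ?_, fun σ hσ => ?_⟩
  · exact Sym2.mem_mk_left _ _
  · have key : ∀ (k : ℕ) (u : {u : V // u ≠ v₀}), H.dist u.1 v₀ = k →
        σ u = Equiv.ofBijective f hbij u := by
      intro k
      induction k using Nat.strong_induction_on with
      | _ k IH =>
        intro u hu
        set x := σ.symm (Equiv.ofBijective f hbij u) with hxdef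
        have hx : σ x = Equiv.ofBijective f hbij u := σ.apply_symm_apply _
        have hmemx : (x : V) ∈ ((Equiv.ofBijective f hbij u : {e : Sym2 V // e ∈ F}) : Sym2 V) :=
          hx ▸ hσ x
        have hfu : ((Equiv.ofBijective f hbij u : {e : Sym2 V // e ∈ F}) : Sym2 V)
            = s(u.1, par u) := rfl
        rw [hfu] at hmemx
        rcases Sym2.mem_iff.mp hmemx with h1 | h1
        · have : x = u := Subtype.ext h1
          rw [← this, hx, this]
        · exfalso
          have hdx : H.dist x.1 v₀ + 1 = k := by rw [h1, ← hu]; exact hpar2 u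
          have hlt : H.dist x.1 v₀ < k := by omega
          have hxu : σ x = Equiv.ofBijective f hbij x := IH _ hlt x rfl
          have : Equiv.ofBijective f hbij x = Equiv.ofBijective f hbij u := by
            rw [← hxu, hx]
          have hxeq : x = u := (Equiv.ofBijective f hbij).injective this
          have hne : u.1 ≠ par u := (hpar1 u).ne
          exact hne (by rw [← h1, hxeq])
    exact Equiv.ext fun u => key _ u rfl

lemma backward_lemma {n : ℕ} (hn : 2 ≤ n) (hV : Fintype.card V = n)
    (v₀ : V) (F : Finset (Sym2 V)) (hd : ∀ e ∈ F, ¬ e.IsDiag)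
    (hex : ∃! σ : {u : V // u ≠ v₀} ≃ {e : Sym2 V // e ∈ F},
      ∀ u, (u : V) ∈ ((σ u : {e : Sym2 V // e ∈ F}) : Sym2 V)) :
    (SimpleGraph.fromEdgeSet (↑F : Set (Sym2 V))).Connected ∧
      (SimpleGraph.fromEdgeSet (↑F : Set (Sym2 V))).IsAcyclic := by
  classical
  obtain ⟨σ, hσ, huni⟩ := hex
  set H := SimpleGraph.fromEdgeSet (↑F : Set (Sym2 V)) with hH
  let g : V → V := fun v => if hv : v = v₀ then v₀ else Sym2.Mem.other' (hσ ⟨v, hv⟩)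
  have hg1 : ∀ (v : V) (hv : v ≠ v₀),
      s(v, g v) = ((σ ⟨v, hv⟩ : {e : Sym2 V // e ∈ F}) : Sym2 V) := by
    intro v hv
    simp only [g, dif_neg hv]
    exact Sym2.other_spec' _
  have hgF : ∀ (v : V) (hv : v ≠ v₀), s(v, g v) ∈ F := fun v hv => by
    rw [hg1 v hv]; exact (σ ⟨v, hv⟩).2
  have hg2 : ∀ (v : V) (hv : v ≠ v₀), g v ≠ v := by
    intro v hv hgv
    exact hd _ (hgF v hv) (by rw [hgv]; exact Sym2.mk_isDiag_iff.mpr rfl)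
  have hcardD : Fintype.card {u : V // u ≠ v₀} = n - 1 := by
    rw [card_ne_subtype, hV]
  -- core: no orbit of `g` avoids `v₀` forever
  have hnoesc : ∀ w : V, (∀ t : ℕ, g^[t] w ≠ v₀) → False := by
    intro w hw
    have hlt : Fintype.card {u : V // u ≠ v₀} < Fintype.card (Fin n) := by
      rw [hcardD, Fintype.card_fin]; omega
    obtain ⟨i, j, hne, heq⟩ := Fintype.exists_ne_map_eq_of_card_lt
      (fun k : Fin n => (⟨g^[k.1] w, hw k.1⟩ : {u : V // u ≠ v₀})) hlt
    have heq' : g^[i.1] w = g^[j.1] w := congrArg Subtype.val heq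
    obtain ⟨a, b, hab, habeq⟩ : ∃ a b : ℕ, a < b ∧ g^[a] w = g^[b] w := by
      have hvne : i.1 ≠ j.1 := fun h => hne (Fin.ext h)
      rcases Nat.lt_or_ge i.1 j.1 with h | h
      · exact ⟨i.1, j.1, h, heq'⟩
      · exact ⟨j.1, i.1, by omega, heq'.symm⟩
    set w' := g^[a] w with hw'
    have hper : g^[b - a] w' = w' := by
      rw [hw', ← Function.iterate_add_apply]
      have hba : b - a + a = b := by omega
      rw [hba, ← habeq]
    have hexm : ∃ m, 0 < m ∧ g^[m] w' = w' := ⟨b - a, by omega, hper⟩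
    obtain ⟨hm0, hmw⟩ := Nat.find_spec hexm
    have horb : ∀ t : ℕ, g^[t] w' ≠ v₀ := by
      intro t
      rw [hw', ← Function.iterate_add_apply]
      exact hw _
    obtain ⟨mm, hM⟩ : ∃ mm, Nat.find hexm = mm + 1 := ⟨Nat.find hexm - 1, by omega⟩
    have hmm1 : 1 ≤ mm := by
      by_contra hcon
      have h1 : Nat.find hexm = 1 := by omega
      rw [h1] at hmw
      exact hg2 w' (horb 0) (by simpa using hmw)
    rw [hM] at hmw
    let x : Fin (mm+1) → {u : V // u ≠ v₀} := fun t => ⟨g^[t.1] w', horb t.1⟩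
    have hxinj : Function.Injective x := by
      intro s t hst
      by_contra hne'
      have hvne : s.1 ≠ t.1 := fun h => hne' (Fin.ext h)
      wlog h : s.1 < t.1 generalizing s t
      · exact this hst.symm (Ne.symm hne') (Ne.symm hvne) (by omega)
      have hval : g^[s.1] w' = g^[t.1] w' := congrArg Subtype.val hst
      have hper2 : g^[(mm+1) - t.1 + s.1] w' = w' := by
        rw [Function.iterate_add_apply, hval, ← Function.iterate_add_apply]
        have ht1 : mm + 1 - t.1 + t.1 = mm + 1 := by have := t.isLt; omega
        rw [ht1]
        exact hmw
      have hlt2 : (mm+1) - t.1 + s.1 < Nat.find hexm := by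
        rw [hM]; have := t.isLt; omega
      exact Nat.find_min hexm hlt2 ⟨by have := t.isLt; omega, hper2⟩
    let emb := Equiv.ofInjective x hxinj
    let π : Equiv.Perm {u : V // u ≠ v₀} := (finRotate (mm+1)).extendDomain emb
    have hπx : ∀ t, π (x t) = x (t + 1) := by
      intro t
      have h := Equiv.Perm.extendDomain_apply_image (finRotate (mm+1)) emb t
      simpa [π, emb, Equiv.ofInjective_apply, finRotate_succ_apply] using h
    have hπsymm : ∀ t, π.symm (x t) = x (t - 1) := by
      intro t
      rw [Equiv.symm_apply_eq, hπx (t-1), sub_add_cancel]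
    let σ' := π.symm.trans σ
    have hσ'0 : ∀ u, σ' u = σ (π.symm u) := fun u => rfl
    have hσ' : ∀ u, (u : V) ∈ ((σ' u : {e : Sym2 V // e ∈ F}) : Sym2 V) := by
      intro u
      by_cases hu : u ∈ Set.range x
      · obtain ⟨t, rfl⟩ := hu
        rw [hσ'0, hπsymm]
        have h2 : ((σ (x (t-1)) : {e : Sym2 V // e ∈ F}) : Sym2 V)
            = s(g^[(t-1).1] w', g (g^[(t-1).1] w')) := (hg1 _ (horb _)).symm
        have h3 : g (g^[(t-1).1] w') = g^[t.1] w' := by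
          rw [← Function.iterate_succ_apply' g]
          rcases eq_or_ne t 0 with rfl | ht
          · have h4 : ((0:Fin (mm+1)) - 1).1 = mm := by rw [Fin.coe_sub_one]; simp
            rw [h4]
            simpa using hmw
          · have h4 : (t - 1).1 = t.1 - 1 := by rw [Fin.coe_sub_one, if_neg ht]
            have h5 : 1 ≤ t.1 := by
              by_contra hcon
              exact ht (Fin.ext (by simp only [Fin.val_zero]; omega))
            rw [h4]
            congr 1
            omega
        rw [h2, h3]
        exact Sym2.mem_mk_right _ _
      · have h1 : π.symm u = u := by
          rw [Equiv.symm_apply_eq]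
          exact (Equiv.Perm.extendDomain_apply_not_subtype _ _ hu).symm
        rw [hσ'0, h1]
        exact hσ u
    have hσσ' : σ' = σ := huni σ' hσ'
    have h0 : σ' (x 0) = σ (x (0 - 1)) := by rw [hσ'0, hπsymm]
    have hne0 : x (0 - 1) ≠ x 0 := by
      intro hcon
      have h1 := hxinj hcon
      have h2 : ((0:Fin (mm+1)) - 1).1 = mm := by rw [Fin.coe_sub_one]; simp
      have h3 := congrArg Fin.val h1
      rw [h2] at h3
      simp at h3
      omega
    have hx01 : σ (x (0 - 1)) = σ (x 0) := by
      rw [← h0, hσσ']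
    exact hne0 (σ.injective hx01)
  have hreach : ∀ v : V, ∃ t : ℕ, g^[t] v = v₀ := by
    intro v
    by_contra hcon
    push_neg at hcon
    exact hnoesc v hcon
  have hadj : ∀ (v : V) (hv : v ≠ v₀), H.Adj v (g v) := fun v hv =>
    (SimpleGraph.fromEdgeSet_adj _).mpr ⟨Finset.mem_coe.mpr (hgF v hv), Ne.symm (hg2 v hv)⟩
  have hreach2 : ∀ v : V, H.Reachable v v₀ := by
    have key : ∀ (t : ℕ) (v : V), g^[t] v = v₀ → H.Reachable v v₀ := by
      intro t
      induction t with
      | zero =>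
        intro v h
        rw [Function.iterate_zero_apply] at h
        exact h ▸ SimpleGraph.Reachable.refl v
      | succ t IH =>
        intro v h
        by_cases hv : v = v₀
        · exact hv ▸ SimpleGraph.Reachable.refl v
        · exact ((hadj v hv).reachable).trans
            (IH (g v) (by rwa [Function.iterate_succ_apply] at h))
    intro v
    obtain ⟨t, ht⟩ := hreach v
    exact key t v ht
  have hconn : H.Connected := by
    rw [SimpleGraph.connected_iff]
    exact ⟨fun a b => (hreach2 a).trans (hreach2 b).symm, ⟨v₀⟩⟩
  refine ⟨hconn, ?_⟩
  -- acyclicity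
  intro v c hc
  obtain ⟨K', hK'⟩ : ∃ K', c.length = K' + 1 := ⟨c.length - 1, by have := hc.three_le_length; omega⟩
  have hK3 : 2 ≤ K' := by have := hc.three_le_length; omega
  let t : Fin (K'+1) → V := fun i => c.getVert (i.1 + 1)
  have htinj : Function.Injective t := by
    intro a b hab
    have h := cycle_getVert_inj hc (by omega) (by rw [hK']; have := a.isLt; omega)
      (by omega) (by rw [hK']; have := b.isLt; omega) hab
    exact Fin.ext (by omega)
  have h10 : (1 : Fin (K'+1)) ≠ 0 := by
    have h1 : ((1 : Fin (K'+1)) : ℕ) = 1 := by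
      rw [Fin.val_one']
      exact Nat.mod_eq_of_lt (by omega)
    intro hcon
    rw [hcon, Fin.val_zero] at h1
    exact one_ne_zero h1.symm
  have hadjE : ∀ i : Fin (K'+1), s(t (i - 1), t i) ∈ F := by
    intro i
    have hEeq : s(t (i-1), t i) = s(c.getVert i.1, c.getVert (i.1+1)) := by
      rcases eq_or_ne i 0 with rfl | hi
      · have h1 : ((0:Fin (K'+1)) - 1).1 = K' := by rw [Fin.coe_sub_one]; simp
        show s(c.getVert (((0:Fin (K'+1)) - 1).1 + 1), c.getVert ((0:Fin (K'+1)).1+1)) = _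
        rw [h1]
        have h2 : c.getVert (K' + 1) = c.getVert 0 := by
          rw [show K' + 1 = c.length from hK'.symm, c.getVert_length, c.getVert_zero]
        rw [h2]
        simp
      · have h1 : (i-1).1 = i.1 - 1 := by rw [Fin.coe_sub_one, if_neg hi]
        have h2 : 1 ≤ i.1 := by
          by_contra hcon
          have hzv : i.1 = 0 := by omega
          exact hi (Fin.ext (by rw [hzv, Fin.val_zero]))
        show s(c.getVert ((i-1).1 + 1), c.getVert (i.1+1)) = _
        rw [h1]
        have h3 : i.1 - 1 + 1 = i.1 := by omega
        rw [h3]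
    rw [hEeq]
    have hadj2 := c.adj_getVert_succ (i := i.1) (by rw [hK']; have := i.isLt; omega)
    exact Finset.mem_coe.mp ((SimpleGraph.fromEdgeSet_adj _).mp hadj2).1
  have hEinj : ∀ a b : Fin (K'+1), s(t (a-1), t a) = s(t (b-1), t b) → a = b := by
    intro a b h
    rcases Sym2.eq_iff.mp h with ⟨h1, h2⟩ | ⟨h1, h2⟩
    · exact htinj h2
    · exfalso
      have hb : a - 1 = b := htinj h1
      have ha : a = b - 1 := htinj h2
      have h3 : b = a + 1 := sub_eq_iff_eq_add.mp ha.symm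
      have h4 : a = b + 1 := sub_eq_iff_eq_add.mp hb
      have h5 := congrArg Fin.val h3
      have h6 := congrArg Fin.val h4
      rw [Fin.val_add_one] at h5 h6
      have hlastval : (Fin.last K').1 = K' := Fin.val_last _
      by_cases hal : a = Fin.last K'
      · rw [if_pos hal] at h5
        have ha' : a.1 = K' := by rw [hal]; exact Fin.val_last _
        by_cases hbl : b = Fin.last K'
        · have hb' : b.1 = K' := by rw [hbl]; exact Fin.val_last _
          omega
        · rw [if_neg hbl] at h6
          omega
      · rw [if_neg hal] at h5
        by_cases hbl : b = Fin.last K'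
        · rw [if_pos hbl] at h6
          have hb' : b.1 = K' := by rw [hbl]; exact Fin.val_last _
          omega
        · rw [if_neg hbl] at h6
          omega
  let ψ : Fin (K'+1) → {u : V // u ≠ v₀} := fun i => σ.symm ⟨s(t (i-1), t i), hadjE i⟩
  have hψval : ∀ i, ((σ (ψ i) : {e : Sym2 V // e ∈ F}) : Sym2 V) = s(t (i-1), t i) := by
    intro i
    show ((σ (σ.symm _) : {e : Sym2 V // e ∈ F}) : Sym2 V) = _
    rw [Equiv.apply_symm_apply]
  have hψinj : Function.Injective ψ := by
    intro a b h
    have h2 := congrArg σ h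
    rw [show σ (ψ a) = σ.symm.symm _ from rfl] at h2
    have h3 : ((σ (ψ a) : {e : Sym2 V // e ∈ F}) : Sym2 V)
        = ((σ (ψ b) : {e : Sym2 V // e ∈ F}) : Sym2 V) := by rw [h]
    rw [hψval a, hψval b] at h3
    exact hEinj a b h3
  have hψmem : ∀ i, (ψ i).1 = t (i-1) ∨ (ψ i).1 = t i := by
    intro i
    have h := hσ (ψ i)
    rw [hψval i] at h
    exact Sym2.mem_iff.mp h
  have hQstep : ∀ i, (ψ i).1 = t i → (ψ (i+1)).1 = t (i+1) := by
    intro i hQ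
    rcases hψmem (i+1) with h | h
    · exfalso
      rw [add_sub_cancel_right] at h
      have h2 : ψ (i+1) = ψ i := Subtype.ext (h.trans hQ.symm)
      have h3 := hψinj h2
      have h4 : (1 : Fin (K'+1)) = 0 := by
        have h5 := congrArg (fun z => z - i) h3
        simpa [add_sub_cancel_left, sub_self] using h5
      exact h10 h4
    · exact h
  have hfin : ∀ (t' : Fin (K'+1) → V), (∀ i, t' i ≠ v₀) → (∀ i, g (t' i) = t' (i+1)) → False := by
    intro t' ht0 hstep
    have hit : ∀ d : ℕ, g^[d] (t' 0) = t' ((d : Fin (K'+1))) := by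
      intro d
      induction d with
      | zero => simp
      | succ d IH =>
        rw [Function.iterate_succ_apply', IH, hstep]
        congr 1
        push_cast
        ring
    obtain ⟨d, hd⟩ := hreach (t' 0)
    rw [hit d] at hd
    exact ht0 _ hd
  by_cases hQ0 : ∃ i, (ψ i).1 = t i
  · obtain ⟨i₀, h₀⟩ := hQ0
    have hall : ∀ d : ℕ, (ψ (i₀ + (d : Fin (K'+1)))).1 = t (i₀ + (d : Fin (K'+1))) := by
      intro d
      induction d with
      | zero => simpa using h₀
      | succ d IH =>
        have hcast : ((d+1 : ℕ) : Fin (K'+1)) = ((d : ℕ) : Fin (K'+1)) + 1 := by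
          push_cast; ring
        rw [hcast, ← add_assoc]
        exact hQstep _ IH
    have hall' : ∀ i, (ψ i).1 = t i := by
      intro i
      have h := hall ((i - i₀).1)
      rwa [Fin.cast_val_eq_self, add_sub_cancel] at h
    have htne : ∀ i, t i ≠ v₀ := fun i => hall' i ▸ (ψ i).2
    have hg' : ∀ i, g (t i) = t (i - 1) := by
      intro i
      have h1 : s(t i, g (t i)) = s(t (i-1), t i) := by
        rw [hg1 (t i) (htne i)]
        have h2 : (⟨t i, htne i⟩ : {u : V // u ≠ v₀}) = ψ i := Subtype.ext (hall' i).symm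
        rw [h2, hψval i]
      rcases Sym2.eq_iff.mp h1 with ⟨h2, h3⟩ | ⟨h2, h3⟩
      · exfalso
        have h4 := htinj h2
        exact h10 (sub_eq_self.mp h4.symm)
      · exact h3
    refine hfin (fun i => t (0 - i)) (fun i => htne _) (fun i => ?_)
    · show g (t (0 - i)) = t (0 - (i + 1))
      rw [hg', sub_sub]
  · push_neg at hQ0
    have hall' : ∀ i, (ψ i).1 = t (i - 1) := fun i => (hψmem i).resolve_right (hQ0 i)
    have htne : ∀ i, t i ≠ v₀ := by
      intro i
      have h := hall' (i + 1)
      rw [add_sub_cancel_right] at h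
      exact h ▸ (ψ (i+1)).2
    have hg' : ∀ i, g (t i) = t (i + 1) := by
      intro i
      have h1 : s(t i, g (t i)) = s(t i, t (i+1)) := by
        rw [hg1 (t i) (htne i)]
        have h2 : (⟨t i, htne i⟩ : {u : V // u ≠ v₀}) = ψ (i+1) := by
          refine Subtype.ext ?_
          rw [hall' (i+1), add_sub_cancel_right]
        rw [h2, hψval (i+1), add_sub_cancel_right]
      rcases Sym2.eq_iff.mp h1 with ⟨h2, h3⟩ | ⟨h2, h3⟩
      · exact h3
      · exfalso
        have h4 := htinj h2
        exact h10 ((left_eq_add.mp h4))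
    exact hfin t htne hg'

end Helpers

/-- for a connected graph `G` on `n` vertices, a fixed vertex `v₀` and a set
`F` of `n - 1` edges of `G`, the set `F` is the edge set of a spanning tree of `G` (the
spanning subgraph with edge set `F` is connected and acyclic) if and only if there is
exactly one bijection `σ : V \ {v₀} → F` such that every `u ∈ V \ {v₀}` is an endpoint
of the edge `σ u`. -/
theorem spanning_tree_iff_unique_nonzero_monomial
    {V : Type*} [Fintype V] [DecidableEq V] {n : ℕ} (hn : 2 ≤ n)
    (G : SimpleGraph V) (hG : G.Connected) (hV : Fintype.card V = n)
    (v₀ : V) (F : Finset (Sym2 V)) (hF : ↑F ⊆ G.edgeSet) (hFc : F.card = n - 1) :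
    ((SimpleGraph.fromEdgeSet (↑F : Set (Sym2 V))).Connected ∧
        (SimpleGraph.fromEdgeSet (↑F : Set (Sym2 V))).IsAcyclic) ↔
      (∃! σ : {u : V // u ≠ v₀} ≃ {e : Sym2 V // e ∈ F},
        ∀ u, (u : V) ∈ ((σ u : {e : Sym2 V // e ∈ F}) : Sym2 V)) := by
  constructor
  · rintro ⟨hconn, -⟩
    exact forward_lemma hn hV v₀ F hFc hconn
  · intro hex
    exact backward_lemma hn hV v₀ F
      (fun e he => G.not_isDiag_of_mem_edgeSet (hF (Finset.mem_coe.mpr he))) hex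
end

section
/- Let G be a connected simple graph with vertex set V of size n and edge set E, let v₀ ∈ V be a fixed vertex, and let F be a set of n−1 edges of G. If there exist at least two distinct bijections σ : V \ {v₀} → F such that every u ∈ V \ {v₀} is an endpoint of σ(u), then the spanning subgraph of G with vertex set V and edge set F is disconnected and contains at least one cycle. -/
open SimpleGraph

/-- build a walk along a sequence of adjacent vertices -/
lemma exists_walk_along {V : Type*} (H : SimpleGraph V) (g : ℕ → V)
    (hadj : ∀ i, H.Adj (g i) (g (i + 1))) (m : ℕ) :
    ∃ w : H.Walk (g 0) (g m), w.length = m ∧ w.support = (List.range (m + 1)).map g := by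
  induction m with
  | zero => exact ⟨SimpleGraph.Walk.nil, rfl, by simp [List.range_succ]⟩
  | succ m ih =>
    obtain ⟨w, hl, hs⟩ := ih
    refine ⟨w.concat (hadj m), ?_, ?_⟩
    · simp [SimpleGraph.Walk.length_concat, hl]
    · rw [SimpleGraph.Walk.support_concat, hs, List.range_succ (n := m + 1), List.map_append]
      simp


/-- for a connected graph `G` on `n` vertices, a fixed vertex `v₀` and a set
`F` of `n - 1` edges of `G`, if there are at least two distinct bijections
`σ : V \ {v₀} → F` such that every `u ∈ V \ {v₀}` is an endpoint of `σ u`, then the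
spanning subgraph of `G` with vertex set `V` and edge set `F` is disconnected and
contains at least one cycle. -/
theorem two_monomials_imp_disconnected_with_cycle
    {V : Type*} [Fintype V] [DecidableEq V] {n : ℕ} (hn : 2 ≤ n)
    (G : SimpleGraph V) (hG : G.Connected) (hV : Fintype.card V = n)
    (v₀ : V) (F : Finset (Sym2 V)) (hF : ↑F ⊆ G.edgeSet) (hFc : F.card = n - 1)
    (σ τ : {u : V // u ≠ v₀} ≃ {e : Sym2 V // e ∈ F}) (hστ : σ ≠ τ)
    (hσ : ∀ u, (u : V) ∈ ((σ u : {e : Sym2 V // e ∈ F}) : Sym2 V))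
    (hτ : ∀ u, (u : V) ∈ ((τ u : {e : Sym2 V // e ∈ F}) : Sym2 V)) :
    ¬ (SimpleGraph.fromEdgeSet (↑F : Set (Sym2 V))).Connected ∧
      ¬ (SimpleGraph.fromEdgeSet (↑F : Set (Sym2 V))).IsAcyclic := by
  classical
  set H := SimpleGraph.fromEdgeSet (↑F : Set (Sym2 V)) with hH
  -- the permutation
  set f : Equiv.Perm {u : V // u ≠ v₀} := σ.trans τ.symm with hf
  have hfapp : ∀ x, τ (f x) = σ x := by
    intro x
    simp [hf, Equiv.trans_apply]
  -- existence of a non-fixed point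
  have hex : ∃ u, f u ≠ u := by
    by_contra h
    push_neg at h
    apply hστ
    ext x
    have := hfapp x
    rw [h x] at this
    rw [← this]
  -- key: the edge assigned by σ
  have key : ∀ x, f x ≠ x → ((σ x : {e : Sym2 V // e ∈ F}) : Sym2 V) = s((x : V), ((f x : {u : V // u ≠ v₀}) : V)) := by
    intro x hx
    have h1 : (x : V) ∈ ((σ x : {e : Sym2 V // e ∈ F}) : Sym2 V) := hσ x
    have h2 : ((f x : {u : V // u ≠ v₀}) : V) ∈ ((σ x : {e : Sym2 V // e ∈ F}) : Sym2 V) := by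
      have := hτ (f x)
      rwa [hfapp x] at this
    have hne : (x : V) ≠ ((f x : {u : V // u ≠ v₀}) : V) := by
      intro h
      exact hx (Subtype.coe_injective h.symm)
    exact ((Sym2.mem_and_mem_iff hne).mp ⟨h1, h2⟩)
  -- σ injective on coercions
  have hσinj : ∀ a b : {u : V // u ≠ v₀},
      ((σ a : {e : Sym2 V // e ∈ F}) : Sym2 V) = ((σ b : {e : Sym2 V // e ∈ F}) : Sym2 V) → a = b := by
    intro a b h
    exact σ.injective (Subtype.coe_injective h)
  -- non-fixed points propagate
  have hAf : ∀ x, f x ≠ x → f (f x) ≠ f x := fun x h h2 => h (f.injective h2)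
  -- adjacency in H from σ-edges
  have hadjH : ∀ x, f x ≠ x → H.Adj (x : V) ((f x : {u : V // u ≠ v₀}) : V) := by
    intro x hx
    rw [hH, SimpleGraph.fromEdgeSet_adj]
    refine ⟨?_, ?_⟩
    · rw [← key x hx]; exact ((σ x : {e : Sym2 V // e ∈ F}).2 : _)
    · intro h; exact hx (Subtype.coe_injective h.symm)
  constructor
  · -- not connected
    intro hcon
    -- descending edge choice
    have hD : ∀ v : {u : V // u ≠ v₀}, ∃ w : V, H.Adj (v : V) w ∧ H.dist w v₀ < H.dist (v : V) v₀ := by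
      intro v
      obtain ⟨p, hp⟩ := hcon.exists_walk_length_eq_dist (v : V) v₀
      have hnil : ¬ p.Nil := SimpleGraph.Walk.not_nil_of_ne v.2
      refine ⟨p.getVert 1, SimpleGraph.Walk.adj_snd hnil, ?_⟩
      have h1 : H.dist (p.getVert 1) v₀ ≤ p.tail.length := SimpleGraph.dist_le p.tail
      have h2 : p.tail.length + 1 = p.length := SimpleGraph.Walk.length_tail_add_one hnil
      have h3 : 0 < H.dist (v : V) v₀ := hcon.pos_dist_of_ne v.2
      omega
    choose w hw1 hw2 using hD
    have hmemD : ∀ v : {u : V // u ≠ v₀}, s((v : V), w v) ∈ F := by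
      intro v
      have := hw1 v
      rw [hH, SimpleGraph.fromEdgeSet_adj] at this
      exact this.1
    set D : {u : V // u ≠ v₀} → {e : Sym2 V // e ∈ F} := fun v => ⟨s((v : V), w v), hmemD v⟩ with hDdef
    have hDinj : Function.Injective D := by
      intro a b h
      rw [hDdef, Subtype.mk.injEq, Sym2.eq_iff] at h
      rcases h with ⟨h1, _⟩ | ⟨h1, h2⟩
      · exact Subtype.coe_injective h1
      · exfalso
        have ha := hw2 a
        have hb := hw2 b
        rw [h2] at ha
        rw [← h1] at hb
        omega
    have hcard : Fintype.card {u : V // u ≠ v₀} = Fintype.card {e : Sym2 V // e ∈ F} := by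
      have h1 : Fintype.card {u : V // u ≠ v₀} = Fintype.card V - 1 := by
        simp [Fintype.card_subtype_compl (fun u : V => u = v₀), Fintype.card_subtype_eq]
      rw [h1, hV, Fintype.card_coe, hFc]
    have hDbij : Function.Bijective D :=
      (Fintype.bijective_iff_injective_and_card D).mpr ⟨hDinj, hcard⟩
    -- pick max-dist non-fixed point
    obtain ⟨u0, hu0⟩ := hex
    obtain ⟨x, hxmem, hxmax⟩ := Finset.exists_max_image
      (Finset.univ.filter (fun v : {u : V // u ≠ v₀} => f v ≠ v))
      (fun v => H.dist (v : V) v₀) ⟨u0, by simp [hu0]⟩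
    simp only [Finset.mem_filter, Finset.mem_univ, true_and] at hxmem
    have hxmax' : ∀ v, f v ≠ v → H.dist (v : V) v₀ ≤ H.dist (x : V) v₀ := by
      intro v hv
      exact hxmax v (by simp [hv])
    set y : {u : V // u ≠ v₀} := f.symm x with hy
    have hfy : f y = x := f.apply_symm_apply x
    have hyx : y ≠ x := by
      intro h
      rw [h] at hfy
      exact hxmem hfy
    have hyA : f y ≠ y := by rw [hfy]; exact fun h => hyx h.symm
    -- σ y = s(y, x), σ x = s(x, f x)
    have hey : ((σ y : {e : Sym2 V // e ∈ F}) : Sym2 V) = s((y : V), (x : V)) := by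
      have := key y hyA
      rwa [hfy] at this
    have hex' : ((σ x : {e : Sym2 V // e ∈ F}) : Sym2 V) = s((x : V), ((f x : {u : V // u ≠ v₀}) : V)) := key x hxmem
    -- top endpoint lemma
    have htop : ∀ (v : {u : V // u ≠ v₀}) (a b : {u : V // u ≠ v₀}),
        (D v : Sym2 V) = s((a : V), (b : V)) →
        H.dist (b : V) v₀ ≤ H.dist (a : V) v₀ → v = a := by
      intro v a b hD hle
      rw [hDdef] at hD
      simp only [Sym2.eq_iff] at hD
      rcases hD with ⟨h1, _⟩ | ⟨h1, h2⟩
      · exact Subtype.coe_injective h1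
      · exfalso
        have := hw2 v
        rw [h1] at this
        rw [h2] at this
        omega
    obtain ⟨v₁, hv₁⟩ := hDbij.surjective (σ y)
    obtain ⟨v₂, hv₂⟩ := hDbij.surjective (σ x)
    have hv₁x : v₁ = x := by
      apply htop v₁ x y
      · rw [hv₁, hey, Sym2.eq_swap]
      · exact hxmax' y hyA
    have hv₂x : v₂ = x := by
      apply htop v₂ x (f x)
      · rw [hv₂, hex']
      · exact hxmax' (f x) (hAf x hxmem)
    have : σ y = σ x := by rw [← hv₁, ← hv₂, hv₁x, hv₂x]
    exact hyx (σ.injective this)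
  · -- not acyclic
    intro hacy
    obtain ⟨u, hu⟩ := hex
    have hAi : ∀ i : ℕ, f (f^[i] u) ≠ f^[i] u := by
      intro i
      induction i with
      | zero => simpa using hu
      | succ i ih =>
        rw [Function.iterate_succ_apply']
        exact hAf _ ih
    have hper : u ∈ Function.periodicPts ⇑f := by
      apply Function.mk_mem_periodicPts (n := orderOf f) (orderOf_pos f)
      show f^[orderOf f] u = u
      rw [Equiv.Perm.iterate_eq_pow, pow_orderOf_eq_one]
      rfl
    set k := Function.minimalPeriod ⇑f u with hk
    have hkpos : 0 < k := Function.minimalPeriod_pos_of_mem_periodicPts hper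
    have hkk : f^[k] u = u := Function.iterate_minimalPeriod
    have hinj := Function.iterate_injOn_Iio_minimalPeriod (f := ⇑f) (x := u)
    have hk1 : k ≠ 1 := by
      intro h
      rw [h] at hkk
      simp only [Function.iterate_one] at hkk
      exact hu hkk
    have hk2 : k ≠ 2 := by
      intro h
      rw [h] at hkk
      have h2 : f (f u) = u := by
        rw [show (2:ℕ) = 1 + 1 from rfl, Function.iterate_succ_apply',
          Function.iterate_one] at hkk
        exact hkk
      have e1 := key u hu
      have e2 := key (f u) (hAf u hu)
      rw [h2] at e2
      exact hu (hσinj u (f u) (by rw [e1, e2, Sym2.eq_swap])).symm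
    have hk3 : 3 ≤ k := by omega
    set g : ℕ → V := fun i => ((f^[i+1] u : {u : V // u ≠ v₀}) : V) with hg
    have hgsucc : ∀ i : ℕ, (f (f^[i+1] u) : V) = g (i+1) := by
      intro i
      rw [hg]
      simp only
      rw [Function.iterate_succ_apply' (f := ⇑f) (n := i+1)]
    have hadjg : ∀ i, H.Adj (g i) (g (i+1)) := by
      intro i
      have := hadjH (f^[i+1] u) (hAi (i+1))
      rwa [hgsucc i] at this
    have hginj : ∀ i < k, ∀ j < k, g i = g j → i = j := by
      intro i hi j hj hgij
      have h1 : f^[i+1] u = f^[j+1] u := Subtype.coe_injective hgij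
      rw [Function.iterate_succ_apply' (f := ⇑f), Function.iterate_succ_apply' (f := ⇑f)] at h1
      exact hinj (Set.mem_Iio.mpr hi) (Set.mem_Iio.mpr hj) (f.injective h1)
    obtain ⟨wlk, hwl, hws⟩ := exists_walk_along H g hadjg (k - 2)
    have hgk1 : g (k-1) = (u : V) := by
      rw [hg]
      simp only
      rw [show k-1+1 = k by omega, hkk]
    have hlast : H.Adj (g (k-2)) (u : V) := by
      have := hadjg (k-2)
      rw [show k-2+1 = k-1 by omega, hgk1] at this
      exact this
    set Q := wlk.concat hlast with hQ
    have hQsupp : Q.support = (List.range k).map g := by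
      rw [hQ, SimpleGraph.Walk.support_concat, hws, show k-2+1 = k-1 by omega,
        ← hgk1, show k = (k-1)+1 by omega, List.range_succ, List.map_append]
      simp [show k - 1 + 1 - 1 = k - 1 by omega]
    have hQpath : Q.IsPath := by
      rw [SimpleGraph.Walk.isPath_def, hQsupp]
      apply List.Nodup.map_on _ List.nodup_range
      intro i hi j hj hij
      exact hginj i (List.mem_range.mp hi) j (List.mem_range.mp hj) hij
    have hadj1 : H.Adj (g 0) (u : V) := by
      have := hadjH u hu
      have hg0 : g 0 = ((f u : {u : V // u ≠ v₀}) : V) := by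
        simp [hg]
      exact hg0 ▸ this.symm
    set P1 : H.Walk (g 0) (u : V) := SimpleGraph.Walk.cons hadj1 SimpleGraph.Walk.nil with hP1def
    have hP1path : P1.IsPath := by
      rw [hP1def]
      apply SimpleGraph.Walk.IsPath.cons SimpleGraph.Walk.IsPath.nil
      simp [hadj1.ne]
    have heq := hacy.path_unique ⟨P1, hP1path⟩ ⟨Q, hQpath⟩
    have hlen : P1.length = Q.length := by rw [Subtype.mk.injEq] at heq; rw [heq]
    rw [hP1def, hQ] at hlen
    simp only [SimpleGraph.Walk.length_cons, SimpleGraph.Walk.length_nil,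
      SimpleGraph.Walk.length_concat, hwl] at hlen
    omega
end

section
/- Every tree on n+1 vertices can be obtained by extension at a special point of a tree on n vertices: for every finite tree T with at least 3 vertices, there exists a leaf u of T such that, denoting by v the unique neighbor of u and by T' the tree obtained from T by deleting u, the vertex v belongs to spr(T') ∪ pspr(T') ∪ dpr(T') ∪ pdpr(T'), i.e., v is a singly pre-pendant point of T', a doubly pre-pendant point of T', or a leaf of T' adjacent to a singly or doubly pre-pendant point of T'. -/
/-- A vertex `v` of a graph `T` is singly pre-pendant (`v ∈ spr(T)`) if at most one
connected component of `T - v` (deleting `v` and all incident edges) has more than one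
vertex. -/
def SinglyPrePendant {V : Type*} (T : SimpleGraph V) (v : V) : Prop :=
  {c : (T.induce {w : V | w ≠ v}).ConnectedComponent | 1 < c.supp.ncard}.Subsingleton

/-- A vertex `v` of a graph `T` is doubly pre-pendant (`v ∈ dpr(T)`) if at most one
connected component of `T - v` has more than two vertices. -/
def DoublyPrePendant {V : Type*} (T : SimpleGraph V) (v : V) : Prop :=
  {c : (T.induce {w : V | w ≠ v}).ConnectedComponent | 2 < c.supp.ncard}.Subsingleton

/-- `v ∈ pspr(T)`: `v` is a leaf of `T` adjacent to a singly pre-pendant vertex. -/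
def PendantAdjSinglyPrePendant {V : Type*} (T : SimpleGraph V) (v : V) : Prop :=
  (T.neighborSet v).ncard = 1 ∧ ∃ w : V, T.Adj v w ∧ SinglyPrePendant T w

/-- `v ∈ pdpr(T)`: `v` is a leaf of `T` adjacent to a doubly pre-pendant vertex. -/
def PendantAdjDoublyPrePendant {V : Type*} (T : SimpleGraph V) (v : V) : Prop :=
  (T.neighborSet v).ncard = 1 ∧ ∃ w : V, T.Adj v w ∧ DoublyPrePendant T w

/-!
Take a longest path `u v v₂ …` in `T`. Since `T` is acyclic, a longest path cannot be extended
at its start, so `u` is a leaf; and replacing `u` by any other neighbour `w ≠ v₂` of `v` gives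
another longest path, so `w` is a leaf too. Hence in `T' = T - u` every edge avoiding `v`
lies in the component of `v₂` in `T' - v`, i.e. `v ∈ spr(T')`.
-/

namespace SimpleGraph

variable {V : Type*} {G : SimpleGraph V}

lemma Walk.mem_support_of_forall_adj_eq {u v t : V} (hu : ∀ w, G.Adj u w → w = v)
    (p : G.Walk u t) (ht : t ≠ u) : v ∈ p.support := by
  cases p with
  | nil => exact absurd rfl ht
  | cons h q => simp [← hu _ h]

lemma Walk.two_le_length_of_not_adj {u v : V} (p : G.Walk u v) (hne : u ≠ v)
    (hadj : ¬G.Adj u v) : 2 ≤ p.length := by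
  by_contra! h
  interval_cases hp : p.length
  · exact hne (Walk.eq_of_length_eq_zero hp)
  · exact hadj (Walk.adj_of_length_eq_one hp)

def Walk.IsLongestPath {u v : V} (p : G.Walk u v) : Prop :=
  p.IsPath ∧ ∀ ⦃x y : V⦄ (q : G.Walk x y), q.IsPath → q.length ≤ p.length

lemma Walk.exists_isLongestPath [Fintype V] {x y : V} {q : G.Walk x y} (hq : q.IsPath) :
    ∃ (u v : V) (p : G.Walk u v), p.IsLongestPath ∧ q.length ≤ p.length := by
  set S := {n | ∃ (u v : V) (p : G.Walk u v), p.IsPath ∧ p.length = n}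
  have hS : BddAbove S := ⟨Fintype.card V, by
    rintro _ ⟨u, v, p, hp, rfl⟩
    exact hp.length_lt.le⟩
  have hqS : q.length ∈ S := ⟨x, y, q, hq, rfl⟩
  obtain ⟨u, v, p, hp, hlen⟩ := Nat.sSup_mem ⟨_, hqS⟩ hS
  refine ⟨u, v, p, ⟨hp, fun a b r hr => ?_⟩, ?_⟩ <;> rw [hlen]
  · exact le_csSup hS ⟨a, b, r, hr, rfl⟩
  · exact le_csSup hS hqS

lemma IsTree.exists_isLongestPath_two_le_length [Fintype V] (hG : G.IsTree)
    (hcard : 3 ≤ Fintype.card V) :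
    ∃ (u v : V) (p : G.Walk u v), p.IsLongestPath ∧ 2 ≤ p.length := by
  classical
  obtain ⟨a, b, c, hab, hac, hbc⟩ := Fintype.two_lt_card_iff.mp hcard
  have hnot : ¬(G.Adj a b ∧ G.Adj a c ∧ G.Adj b c) := fun h =>
    hG.isAcyclic.cliqueFree le_rfl {a, b, c} (is3Clique_triple_iff.mpr h)
  obtain ⟨x, y, hxy, hadj⟩ : ∃ x y : V, x ≠ y ∧ ¬G.Adj x y := by
    by_cases h1 : G.Adj a b
    · by_cases h2 : G.Adj a c
      · exact ⟨b, c, hbc, fun h3 => hnot ⟨h1, h2, h3⟩⟩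
      · exact ⟨a, c, hac, h2⟩
    · exact ⟨a, b, hab, h1⟩
  obtain ⟨q, hq⟩ := hG.1.preconnected.exists_isPath x y
  obtain ⟨u, v, p, hp, hlen⟩ := Walk.exists_isLongestPath hq
  exact ⟨u, v, p, hp, (q.two_le_length_of_not_adj hxy hadj).trans hlen⟩

lemma IsAcyclic.eq_snd_of_adj_of_isLongestPath (hG : G.IsAcyclic) {u v w : V} {p : G.Walk u v}
    (hp : p.IsLongestPath) (hw : G.Adj u w) : w = p.snd := by
  by_cases hwp : w ∈ p.support
  · exact hG.eq_snd_of_adj_start hp.1 hw hwp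
  · have := hp.2 _ (hp.1.cons hwp (h := hw.symm))
    simp at this

lemma IsAcyclic.eq_of_adj_of_isLongestPath_cons (hG : G.IsAcyclic) {u v y w z : V}
    {h : G.Adj u v} {q : G.Walk v y} (hp : (Walk.cons h q).IsLongestPath) (hw : G.Adj v w)
    (hwq : w ≠ q.snd) (hz : G.Adj w z) : z = v := by
  have hq : q.IsPath := hp.1.of_cons
  have hwq' : w ∉ q.support := fun hmem => hwq (hG.eq_snd_of_adj_start hq hw hmem)
  have hlongest : (Walk.cons hw.symm q).IsLongestPath :=
    ⟨hq.cons hwq', fun _ _ r hr => (hp.2 r hr).trans_eq (by simp)⟩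
  simpa using hG.eq_snd_of_adj_of_isLongestPath hlongest hz

lemma subsingleton_setOf_one_lt_ncard_supp (x : V) (h : ∀ a b, G.Adj a b → G.Reachable x a) :
    {c : G.ConnectedComponent | 1 < c.supp.ncard}.Subsingleton := by
  suffices hc : ∀ c : G.ConnectedComponent, 1 < c.supp.ncard → c = G.connectedComponentMk x from
    fun c hc' d hd' => (hc c hc').trans (hc d hd').symm
  intro c hc
  obtain ⟨a, ha, b, hb, hab⟩ := (Set.one_lt_ncard_iff_nontrivial_and_finite.mp hc).1
  rw [ConnectedComponent.mem_supp_iff] at ha hb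
  obtain ⟨p⟩ := ConnectedComponent.exact (ha.trans hb.symm)
  rw [← ha]
  exact (ConnectedComponent.sound (h a _ (p.adj_snd (Walk.not_nil_of_ne hab)))).symm

lemma Preconnected.exists_walk_not_mem_support (hG : G.Preconnected) {v x a b : V}
    (hleaves : ∀ w, G.Adj v w → w ≠ x → ∀ z, G.Adj w z → z = v) (hab : G.Adj a b)
    (ha : a ≠ v) (hb : b ≠ v) : ∃ p : G.Walk x a, v ∉ p.support := by
  obtain ⟨q, hq⟩ := hG.exists_isPath v a
  cases q with
  | nil => exact absurd rfl ha
  | @cons _ w _ hvw q =>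
    have hvq : v ∉ q.support := ((Walk.cons_isPath_iff _ _).mp hq).2
    by_cases hwx : w = x
    · exact hwx ▸ ⟨q, hvq⟩
    · have hleaf := hleaves w hvw hwx
      have haw : a = w := by
        by_contra h
        exact hvq (q.mem_support_of_forall_adj_eq hleaf h)
      exact absurd (hleaf b (haw ▸ hab)) hb

lemma Preconnected.singlyPrePendant_of_pendant_neighbors (hG : G.Preconnected) {v x : V}
    (hx : x ≠ v) (hleaves : ∀ w, G.Adj v w → w ≠ x → ∀ z, G.Adj w z → z = v) :
    SinglyPrePendant G v := by
  refine subsingleton_setOf_one_lt_ncard_supp ⟨x, hx⟩ fun a b hab => ?_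
  obtain ⟨p, hp⟩ := hG.exists_walk_not_mem_support hleaves hab a.2 b.2
  exact ⟨p.induce {w | w ≠ v} fun z hz (hzv : z = v) => hp (hzv ▸ hz)⟩

end SimpleGraph

open SimpleGraph

/-- every finite tree `T` with at least 3 vertices can be obtained by
extension at a special point of a smaller tree: there is a leaf `u` of `T` with unique
neighbor `v` such that, in the tree `T'` obtained from `T` by deleting `u`, the vertex
`v` belongs to `spr(T') ∪ pspr(T') ∪ dpr(T') ∪ pdpr(T')`. -/
theorem tree_is_extension_at_special_point {V : Type*} [Fintype V] (T : SimpleGraph V)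
    (hT : T.IsTree) (hcard : 3 ≤ Fintype.card V) :
    ∃ (u v : V) (h : T.Adj u v), (T.neighborSet u).ncard = 1 ∧
      (SinglyPrePendant (T.induce {w : V | w ≠ u}) ⟨v, h.ne'⟩ ∨
       PendantAdjSinglyPrePendant (T.induce {w : V | w ≠ u}) ⟨v, h.ne'⟩ ∨
       DoublyPrePendant (T.induce {w : V | w ≠ u}) ⟨v, h.ne'⟩ ∨
       PendantAdjDoublyPrePendant (T.induce {w : V | w ≠ u}) ⟨v, h.ne'⟩) := by
  classical
  obtain ⟨u, y, p, hp, hlen⟩ := hT.exists_isLongestPath_two_le_length hcard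
  rcases p with _ | ⟨h₁, _ | ⟨h₂, q⟩⟩
  · simp at hlen
  · simp at hlen
  rename_i v v₂
  have hu : ∀ w, T.Adj u w → w = v := fun w hw =>
    hT.isAcyclic.eq_snd_of_adj_of_isLongestPath hp hw
  have hleaves : ∀ w, T.Adj v w → w ≠ v₂ → ∀ z, T.Adj w z → z = v := fun w hw hwv₂ z hz =>
    hT.isAcyclic.eq_of_adj_of_isLongestPath_cons hp hw (by simpa using hwv₂) hz
  have hv₂u : v₂ ≠ u := fun h => ((Walk.cons_isPath_iff _ _).mp hp.1).2 (h ▸ by simp)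
  have hconn : (T.induce {w | w ≠ u}).Preconnected :=
    (hT.1.induce_compl_singleton_of_degree_eq_one
      (degree_eq_one_iff_existsUnique_adj.mpr ⟨v, h₁, hu⟩)).preconnected
  refine ⟨u, v, h₁, Set.ncard_eq_one.mpr ⟨v, Set.ext fun w => ⟨hu w, fun hw => hw ▸ h₁⟩⟩,
    Or.inl (hconn.singlyPrePendant_of_pendant_neighbors (x := ⟨v₂, hv₂u⟩)
      (by simpa using h₂.ne') ?_)⟩
  rintro w hw hwv₂ z hz
  exact Subtype.ext (hleaves w hw (fun h => hwv₂ (Subtype.ext h)) z hz)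
end

section
/- (Rosa) If a tree T with m ≥ 1 edges has a graceful labeling, then the complete graph K_{2m+1} can be decomposed into 2m+1 copies of T: the edge set of K_{2m+1} can be partitioned into 2m+1 classes such that each class is the edge set of a subgraph of K_{2m+1} isomorphic to T. -/
/-- The induced edge-labeling of a vertex-labeling `f`: the edge `{u, v}` receives the
label `|f u - f v|`. -/
def edgeLabel {V : Type*} (f : V → ℕ) : Sym2 V → ℕ :=
  Sym2.lift ⟨fun a b => ((f a : ℤ) - (f b : ℤ)).natAbs, fun a b => by simp only []; omega⟩

/-- Rosa: if a tree `T` with `m ≥ 1` edges has a graceful labeling, then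
the complete graph `K_{2m+1}` can be decomposed into `2m+1` copies of `T`: its edge set
can be partitioned into `2m+1` classes, each of which is the image of the edge set of `T`
under an injection of the vertices of `T` into those of `K_{2m+1}`. -/
theorem rosa_graceful_imp_decomposition {V : Type*} [Fintype V] (T : SimpleGraph V)
    (hT : T.IsTree) {m : ℕ} (hm : 1 ≤ m) (hedges : T.edgeSet.ncard = m)
    (hgraceful : ∃ f : V → ℕ,
      Set.BijOn f Set.univ (Set.Icc 1 (Fintype.card V)) ∧
      Set.BijOn (edgeLabel f) T.edgeSet (Set.Icc 1 (Fintype.card V - 1))) :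
    ∃ P : Fin (2 * m + 1) → Set (Sym2 (Fin (2 * m + 1))),
      (∀ i j, i ≠ j → Disjoint (P i) (P j)) ∧
      (⋃ i, P i) = (⊤ : SimpleGraph (Fin (2 * m + 1))).edgeSet ∧
      ∀ i, ∃ φ : V → Fin (2 * m + 1), Function.Injective φ ∧
        Set.BijOn (Sym2.map φ) T.edgeSet (P i) := by
  classical
  obtain ⟨f, hf, hg⟩ := hgraceful
  haveI : NeZero (2 * m + 1) := ⟨by omega⟩
  have hcard : Fintype.card V = m + 1 := by
    have h1 : (Set.Icc 1 (Fintype.card V - 1)).ncard = m := by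
      rw [← hg.image_eq, Set.ncard_image_of_injOn hg.injOn, hedges]
    rw [← Finset.coe_Icc, Set.ncard_coe_finset, Nat.card_Icc] at h1
    omega
  have hfr : ∀ v : V, 1 ≤ f v ∧ f v ≤ m + 1 := by
    intro v
    have h := hf.mapsTo (Set.mem_univ v)
    rw [hcard] at h
    exact h
  have hgr : Set.BijOn (edgeLabel f) T.edgeSet (Set.Icc 1 m) := by
    have h : Fintype.card V - 1 = m := by omega
    rwa [h] at hg
  set N := 2 * m + 1 with hNdef
  have hcast : ∀ a b : ℕ, a ≤ 2 * m → b ≤ 2 * m →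
      (a : ZMod N) = (b : ZMod N) → a = b := by
    intro a b ha hb h
    have h2 := congrArg ZMod.val h
    rwa [ZMod.val_cast_of_lt (by omega), ZMod.val_cast_of_lt (by omega)] at h2
  have hnz : ∀ a : ℕ, 1 ≤ a → a ≤ 2 * m → (a : ZMod N) ≠ 0 := by
    intro a h1 h2 h
    have h3 := (ZMod.natCast_eq_zero_iff a N).mp h
    have h4 := Nat.le_of_dvd (by omega) h3
    omega
  set g : V → ZMod N := fun v => (f v : ZMod N) with hgdef
  have hdiff : ∀ u v : V, s(u, v) ∈ T.edgeSet →
      g u - g v = (edgeLabel f s(u, v) : ZMod N) ∨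
      g u - g v = -(edgeLabel f s(u, v) : ZMod N) := by
    intro u v _
    simp only [edgeLabel, Sym2.lift_mk, hgdef]
    rcases le_or_gt (f v) (f u) with h | h
    · left
      have h2 : ((f u : ℤ) - f v).natAbs = f u - f v := by omega
      rw [h2, Nat.cast_sub h]
    · right
      have h2 : ((f u : ℤ) - f v).natAbs = f v - f u := by omega
      rw [h2, Nat.cast_sub h.le]
      ring
  have hlab : ∀ e ∈ T.edgeSet, 1 ≤ edgeLabel f e ∧ edgeLabel f e ≤ m :=
    fun e he => hgr.mapsTo he
  have hginj : Function.Injective g := by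
    intro a b h
    have ha := hfr a; have hb := hfr b
    have h2 := hcast (f a) (f b) (by omega) (by omega) h
    exact hf.injOn (Set.mem_univ a) (Set.mem_univ b) h2
  -- the difference determines the edge
  have hdd : ∀ u v u' v', s(u, v) ∈ T.edgeSet → s(u', v') ∈ T.edgeSet →
      (g u - g v = g u' - g v' ∨ g u - g v = -(g u' - g v')) →
      (s(u, v) : Sym2 V) = s(u', v') := by
    intro u v u' v' he he' hcases
    obtain ⟨hd1, hd2⟩ := hlab _ he
    obtain ⟨hd1', hd2'⟩ := hlab _ he'
    set d := edgeLabel f s(u, v) with hd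
    set d' := edgeLabel f s(u', v') with hd'
    have hne : ¬((d : ZMod N) = -(d' : ZMod N)) := by
      intro h
      have h0 : ((d + d' : ℕ) : ZMod N) = 0 := by push_cast [h]; ring
      exact hnz (d + d') (by omega) (by omega) h0
    have key : ((d : ZMod N) = (d' : ZMod N)) ∨ ((d : ZMod N) = -(d' : ZMod N)) := by
      rcases hdiff u v he with h1 | h1 <;> rcases hdiff u' v' he' with h2 | h2 <;>
        rcases hcases with h3 | h3 <;>
        rw [← hd] at h1 <;> rw [← hd'] at h2 <;>
        first
          | (left; linear_combination -h1 + h2 + h3)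
          | (left; linear_combination -h1 - h2 + h3)
          | (left; linear_combination h1 + h2 - h3)
          | (left; linear_combination h1 - h2 - h3)
          | (right; linear_combination -h1 + h2 + h3)
          | (right; linear_combination -h1 - h2 + h3)
          | (right; linear_combination h1 + h2 - h3)
          | (right; linear_combination h1 - h2 - h3)
    rcases key with k | k
    · exact hgr.injOn he he' (hcast d d' (by omega) (by omega) k)
    · exact absurd k hne
  -- no edge difference is its own negative
  have h2d : ∀ u v : V, s(u, v) ∈ T.edgeSet → g u - g v ≠ g v - g u := by
    intro u v he h
    obtain ⟨hd1, hd2⟩ := hlab _ he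
    have h0 : (((2 * edgeLabel f s(u, v)) : ℕ) : ZMod N) = 0 := by
      push_cast
      rcases hdiff u v he with h1 | h1
      · linear_combination h - 2 * h1
      · linear_combination -h + 2 * h1
    exact hnz _ (by omega) (by omega) h0
  refine ⟨fun i : ZMod (2 * m + 1) => Sym2.map (fun v => g v + i) '' T.edgeSet,
    ?_, ?_, ?_⟩
  · -- disjointness
    intro (i : ZMod N) (j : ZMod N) hij
    rw [Set.disjoint_left]
    rintro c ⟨e, he, hce⟩ ⟨e', he', hce'⟩
    rw [← hce'] at hce
    clear hce'
    induction e using Sym2.ind with | _ u v => ?_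
    induction e' using Sym2.ind with | _ u' v' => ?_
    change (Sym2.map (fun v => g v + i) s(u, v) : Sym2 (ZMod N)) = Sym2.map (fun v => g v + j) s(u', v') at hce
    rw [Sym2.map_pair_eq, Sym2.map_pair_eq, Sym2.eq_iff] at hce
    rcases hce with ⟨ha, hb⟩ | ⟨ha, hb⟩
    · have hee : (s(u, v) : Sym2 V) = s(u', v') :=
        hdd u v u' v' he he' (Or.inl (by linear_combination ha - hb))
      rw [Sym2.eq_iff] at hee
      rcases hee with ⟨h1, h2⟩ | ⟨h1, h2⟩
      · subst h1; subst h2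
        exact hij (by linear_combination ha)
      · subst h1; subst h2
        exact h2d u v he (by linear_combination ha - hb)
    · have hee : (s(u, v) : Sym2 V) = s(u', v') :=
        hdd u v u' v' he he' (Or.inr (by linear_combination ha - hb))
      rw [Sym2.eq_iff] at hee
      rcases hee with ⟨h1, h2⟩ | ⟨h1, h2⟩
      · subst h1; subst h2
        exact h2d u v he (by linear_combination ha - hb)
      · subst h1; subst h2
        exact hij (by linear_combination ha)
  · -- covers everything
    show (⋃ i : ZMod N, Sym2.map (fun v => g v + i) '' T.edgeSet)
      = (⊤ : SimpleGraph (ZMod N)).edgeSet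
    ext c
    simp only [Set.mem_iUnion]
    constructor
    · rintro ⟨i, e, he, rfl⟩
      induction e using Sym2.ind with | _ u v => ?_
      rw [SimpleGraph.edgeSet_top, Sym2.map_pair_eq]
      simp only [Set.mem_compl_iff, Sym2.mem_diagSet, Sym2.mk_isDiag_iff]
      intro h
      have huv : u ≠ v := (T.mem_edgeSet.mp he).ne
      exact huv (hginj (by linear_combination h))
    · intro hc
      induction c using Sym2.ind with | _ x y => ?_
      rw [SimpleGraph.mem_edgeSet, SimpleGraph.top_adj] at hc
      set δ := (x - y).val with hδdef
      have hδ0 : x - y ≠ 0 := sub_ne_zero.mpr hc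
      have hδ1 : 1 ≤ δ := Nat.one_le_iff_ne_zero.mpr
        (by rw [hδdef, Ne, ZMod.val_eq_zero]; exact hδ0)
      have hδlt : δ < N := by rw [hδdef]; exact ZMod.val_lt _
      have hcastδ : (δ : ZMod N) = x - y := by
        rw [hδdef]; exact ZMod.natCast_rightInverse _
      obtain ⟨x', y', d, hsym, hd1, hd2, hdx⟩ :
          ∃ x' y' d, (s(x', y') : Sym2 (ZMod N)) = s(x, y) ∧ 1 ≤ d ∧ d ≤ m ∧
            x' - y' = (d : ZMod N) := by
        rcases le_or_gt δ m with h | h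
        · exact ⟨x, y, δ, rfl, hδ1, h, hcastδ.symm⟩
        · refine ⟨y, x, N - δ, Sym2.eq_swap, by omega, by omega, ?_⟩
          have h2 : ((N - δ : ℕ) : ZMod N) = -(δ : ZMod N) := by
            rw [Nat.cast_sub hδlt.le]
            simp [ZMod.natCast_self]
          rw [h2, hcastδ]
          ring
      obtain ⟨e, he, hde⟩ := hgr.surjOn (Set.mem_Icc.mpr ⟨hd1, hd2⟩)
      induction e using Sym2.ind with | _ u v => ?_
      rcases hdiff u v he with h1 | h1 <;> rw [hde] at h1
      · refine ⟨x' - g u, s(u, v), he, ?_⟩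
        rw [Sym2.map_pair_eq, ← hsym]
        have e1 : g u + (x' - g u) = x' := by ring
        have e2 : g v + (x' - g u) = y' := by linear_combination hdx - h1
        rw [e1, e2]
      · refine ⟨y' - g u, s(u, v), he, ?_⟩
        rw [Sym2.map_pair_eq, ← hsym]
        have e1 : g u + (y' - g u) = y' := by ring
        have e2 : g v + (y' - g u) = x' := by linear_combination -hdx - h1
        rw [e1, e2, Sym2.eq_swap]
  · -- each class is a copy of T
    intro i
    have hφinj : Function.Injective (fun v => g v + (show ZMod N from i)) := by
      intro a b h
      exact hginj (add_right_cancel h)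
    exact ⟨_, hφinj, (Sym2.map.injective hφinj).injOn.bijOn_image⟩
end
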